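/- Let m > 2 be odd and n ≥ 1, and let G be a group of order 2mn generated by elements a and b satisfying a^m = 1, b^(2n) = 1, and b·a·b⁻¹ = a⁻¹ (the metacyclic group M_{2mn}). Then the characteristic polynomial of the adjacency matrix of the commuting graph Γ_G (over the reals) equals (X + 1)^(2mn − m − n − 1) · (X − (n − 1))^m · (X − (mn − n − 1)); in particular G is commuting integral. -/

import Mathlib

/-!
Every element of `G` is a word `a ^ i * (b ^ 2) ^ k * b ^ ε` with `i : ZMod m`, `k : ZMod n`,
`ε ∈ {0, 1}`; these `2mn` words exhaust the group generated by `a` and `b`, so they are pairwise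
distinct. Since `b ^ 2` commutes with `a`, two words commute iff
`i + (-1) ^ ε * i' = i' + (-1) ^ ε' * i`, and as `2` is invertible mod `m` the centre is `⟨b ^ 2⟩`
and the non-central elements split into cliques with no edges between them: the `(m - 1) n`
non-central elements of the abelian subgroup `⟨a, b ^ 2⟩`, and for each `i` the `n` words with
`ε = 1`. The adjacency matrix is then block diagonal with blocks `J - 1`, whose characteristic
polynomial is `(X + 1) ^ (s - 1) * (X - (s - 1))` in size `s`.
-/

open Polynomial

/-- The commuting graph of a group `G`: vertices are the non-central elements,
two distinct vertices are adjacent iff they commute. -/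
def commutingGraph (G : Type*) [Group G] : SimpleGraph {x : G // x ∉ Subgroup.center G} where
  Adj x y := x ≠ y ∧ (x : G) * y = (y : G) * x
  symm := ⟨by rintro x y ⟨hne, hc⟩; exact ⟨hne.symm, hc.symm⟩⟩
  loopless := ⟨by rintro x ⟨hne, _⟩; exact hne rfl⟩

open scoped Classical in
/-- The characteristic polynomial (over `ℝ`) of the adjacency matrix of the
commuting graph of `G`. -/
noncomputable def commCharpoly (G : Type*) [Group G] [Fintype G] : Polynomial ℝ :=
  ((commutingGraph G).adjMatrix ℝ).charpoly

open Finset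

namespace SimpleGraph

variable {V R : Type*} [Fintype V] [DecidableEq V] [CommRing R]

theorem charpoly_adjMatrix_completeGraph [Nonempty V] :
    ((completeGraph V).adjMatrix R).charpoly
      = (X + 1) ^ (Fintype.card V - 1) * (X - C ((Fintype.card V : R) - 1)) := by
  have hJ : (Matrix.of 1 : Matrix V V R) = Matrix.vecMulVec 1 1 := by
    ext; simp [Matrix.vecMulVec_apply]
  have hk : 1 ≤ Fintype.card V := Fintype.card_pos
  rw [adjMatrix_completeGraph_eq_of_one_sub_one, hJ, ← map_one (Matrix.scalar V),
    Matrix.charpoly_sub_scalar, Matrix.charpoly_vecMulVec]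
  obtain ⟨k, hk⟩ : ∃ k, Fintype.card V = k + 1 := ⟨_, (Nat.sub_add_cancel hk).symm⟩
  rw [one_dotProduct_one, hk, Nat.add_sub_cancel, smul_eq_C_mul, sub_comp, mul_comp, pow_comp,
    pow_comp, X_comp, C_comp, pow_succ, Nat.cast_succ, add_sub_cancel_right, map_add, map_one]
  ring

theorem charpoly_adjMatrix_of_adj_iff {ι : Type*} [DecidableEq ι] (G : SimpleGraph V)
    [DecidableRel G.Adj] (f : V → ι) (hG : ∀ x y, G.Adj x y ↔ x ≠ y ∧ f x = f y) :
    (G.adjMatrix R).charpoly = ∏ i ∈ univ.image f, (X + 1) ^ (Fintype.card {x // f x = i} - 1) *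
      (X - C ((Fintype.card {x // f x = i} : R) - 1)) := by
  have hcliques : (G.adjMatrix R).charpoly
      = ∏ i ∈ univ.image f, ((completeGraph {x // f x = i}).adjMatrix R).charpoly := by
    -- Any linear order will do: the matrix is block diagonal with respect to `f`.
    let _ : LinearOrder ι := WellOrderingRel.isWellOrder.linearOrder
    have hblock : (G.adjMatrix R).BlockTriangular f := fun x y hxy ↦ by
      simp [hG, hxy.ne']
    convert hblock.charpoly using 3 with i
    ext ⟨x, hx⟩ ⟨y, hy⟩
    simp [Matrix.toSquareBlock_def, hG, hx, hy, Subtype.ext_iff]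
  rw [hcliques]
  refine prod_congr rfl fun i hi ↦ ?_
  obtain ⟨x, -, hx⟩ := mem_image.mp hi
  have : Nonempty {x // f x = i} := ⟨⟨x, hx⟩⟩
  exact charpoly_adjMatrix_completeGraph

end SimpleGraph

section ZModPow

variable {m : ℕ}

theorem ZMod.eq_zero_of_neg_eq_self (hm : Odd m) {x : ZMod m} (hx : -x = x) : x = 0 :=
  ((ZMod.neg_eq_self_iff x).mp hx).resolve_right fun h ↦
    Nat.not_even_iff_odd.mpr hm ⟨x.val, by omega⟩

variable {M : Type*} [Monoid M] {x : M}

theorem pow_natCast_val (hx : x ^ m = 1) (k : ℕ) : x ^ (k : ZMod m).val = x ^ k := by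
  rw [ZMod.val_natCast, ← pow_eq_pow_mod _ hx]

theorem pow_val_add [NeZero m] (hx : x ^ m = 1) (i j : ZMod m) :
    x ^ (i + j).val = x ^ i.val * x ^ j.val := by
  rw [ZMod.val_add, ← pow_eq_pow_mod _ hx, pow_add]

theorem pow_val_neg {G : Type*} [Group G] {x : G} [NeZero m] (hx : x ^ m = 1) (i : ZMod m) :
    x ^ (-i).val = (x ^ i.val)⁻¹ :=
  eq_inv_of_mul_eq_one_left <| by rw [← pow_val_add hx, neg_add_cancel, ZMod.val_zero, pow_zero]

end ZModPow

namespace Metacyclic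

variable {G : Type*} [Group G] {a b : G} {m n : ℕ}

def coords (a b : G) (m n : ℕ) (p : ZMod m × ZMod n × Bool) : G :=
  a ^ p.1.val * (b ^ 2) ^ p.2.1.val * cond p.2.2 b 1

theorem semiconjBy_inv (hrel : b * a * b⁻¹ = a⁻¹) : SemiconjBy b a a⁻¹ := by
  rw [SemiconjBy, ← hrel, inv_mul_cancel_right]

theorem mul_pow_val [NeZero m] (ha : a ^ m = 1) (hrel : b * a * b⁻¹ = a⁻¹) (i : ZMod m) :
    b * a ^ i.val = a ^ (-i).val * b := by
  rw [((semiconjBy_inv hrel).pow_right _).eq, inv_pow, pow_val_neg ha]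

theorem commute_sq (hrel : b * a * b⁻¹ = a⁻¹) : Commute a (b ^ 2) := by
  have h := semiconjBy_inv hrel
  simpa [SemiconjBy, Commute, pow_two] using (h.inv_right.mul_left h).symm

theorem coords_surjective [Finite G] [NeZero m] (ha : a ^ m = 1) (hb : b ^ (2 * n) = 1)
    (hrel : b * a * b⁻¹ = a⁻¹) (hgen : Subgroup.closure ({a, b} : Set G) = ⊤) :
    Function.Surjective (coords a b m n) := by
  have hc : (b ^ 2) ^ n = 1 := by rw [← pow_mul, hb]
  have hbc (k : ℕ) : b * (b ^ 2) ^ k = (b ^ 2) ^ k * b := ((Commute.self_pow b 2).pow_right k).eq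
  have htop : Submonoid.closure ({a, b} : Set G) = ⊤ := by
    rw [← Subgroup.closure_toSubmonoid_of_finite, hgen, Subgroup.top_toSubmonoid]
  intro g
  induction g using Submonoid.induction_of_closure_eq_top_left htop with
  | one => exact ⟨(0, 0, false), by simp [coords]⟩
  | mul_left x hx y ih =>
    obtain ⟨⟨i, k, ε⟩, rfl⟩ := ih
    obtain hx | hx := hx <;> rw [hx]
    · refine ⟨((i.val + 1 : ℕ), k, ε), ?_⟩
      simp only [coords, pow_natCast_val ha, pow_succ', mul_assoc]
    · cases ε
      · refine ⟨(-i, k, true), ?_⟩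
        simp only [coords, cond_true, cond_false, mul_one, ← mul_assoc, mul_pow_val ha hrel]
        rw [mul_assoc _ b, hbc, mul_assoc]
      · refine ⟨(-i, (k.val + 1 : ℕ), false), ?_⟩
        simp only [coords, cond_true, cond_false, mul_one, ← mul_assoc, mul_pow_val ha hrel]
        rw [pow_natCast_val hc, pow_succ, mul_assoc _ b, hbc]
        simp only [mul_assoc, pow_two]

theorem cond_mul_pow_val [NeZero m] (ha : a ^ m = 1) (hrel : b * a * b⁻¹ = a⁻¹) (ε : Bool)
    (i : ZMod m) : cond ε b 1 * a ^ i.val = a ^ (cond ε (-i) i).val * cond ε b 1 := by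
  cases ε <;> simp [mul_pow_val ha hrel]

theorem coords_eq (hrel : b * a * b⁻¹ = a⁻¹) (p : ZMod m × ZMod n × Bool) :
    coords a b m n p = (b ^ 2) ^ p.2.1.val * (a ^ p.1.val * cond p.2.2 b 1) := by
  rw [coords, ((commute_sq hrel).pow_pow _ _).eq, mul_assoc]

theorem coords_mul_coords [NeZero m] (ha : a ^ m = 1) (hrel : b * a * b⁻¹ = a⁻¹)
    (p q : ZMod m × ZMod n × Bool) :
    coords a b m n p * coords a b m n q = (b ^ 2) ^ (p.2.1.val + q.2.1.val) *
      (a ^ (p.1 + cond p.2.2 (-q.1) q.1).val * (cond p.2.2 b 1 * cond q.2.2 b 1)) := by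
  obtain ⟨i, k, ε⟩ := p
  obtain ⟨j, l, δ⟩ := q
  have hc : Commute (a ^ i.val * cond ε b 1) ((b ^ 2) ^ l.val) :=
    ((commute_sq hrel).pow_left _).mul_left (by cases ε <;> simp) |>.pow_right _
  calc coords a b m n (i, k, ε) * coords a b m n (j, l, δ)
      = (b ^ 2) ^ k.val * ((a ^ i.val * cond ε b 1) * (b ^ 2) ^ l.val) *
          (a ^ j.val * cond δ b 1) := by simp only [coords_eq hrel, mul_assoc]
    _ = (b ^ 2) ^ (k.val + l.val) * (a ^ i.val * (cond ε b 1 * a ^ j.val) * cond δ b 1) := by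
          rw [hc.eq, pow_add]; simp only [mul_assoc]
    _ = _ := by rw [cond_mul_pow_val ha hrel, pow_val_add ha]; simp only [mul_assoc]

theorem coords_mul_comm_iff [NeZero m] (ha : a ^ m = 1) (hrel : b * a * b⁻¹ = a⁻¹)
    (hinj : Function.Injective fun i : ZMod m ↦ a ^ i.val) (p q : ZMod m × ZMod n × Bool) :
    coords a b m n p * coords a b m n q = coords a b m n q * coords a b m n p ↔
      p.1 + cond p.2.2 (-q.1) q.1 = q.1 + cond q.2.2 (-p.1) p.1 := by
  have hb : cond p.2.2 b 1 * cond q.2.2 b 1 = cond q.2.2 b 1 * cond p.2.2 b 1 := by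
    cases p.2.2 <;> cases q.2.2 <;> simp
  rw [coords_mul_coords ha hrel, coords_mul_coords ha hrel, add_comm q.2.1.val, mul_right_inj,
    hb, mul_left_inj]
  exact hinj.eq_iff

theorem pow_val_injective (hinj : Function.Injective (coords a b m n)) :
    Function.Injective fun i : ZMod m ↦ a ^ i.val := fun i j h ↦
  congrArg Prod.fst (@hinj (i, 0, false) (j, 0, false) (by simpa [coords] using h))

theorem coords_mem_center_iff [NeZero m] (hm : m ≠ 1) (hodd : Odd m) (ha : a ^ m = 1)
    (hrel : b * a * b⁻¹ = a⁻¹) (hbij : Function.Bijective (coords a b m n))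
    (p : ZMod m × ZMod n × Bool) :
    coords a b m n p ∈ Subgroup.center G ↔ p.1 = 0 ∧ p.2.2 = false := by
  have hcomm := coords_mul_comm_iff (n := n) ha hrel (pow_val_injective hbij.1)
  rw [Subgroup.mem_center_iff]
  constructor
  · intro h
    have h1 := (hcomm (1, 0, false) p).mp (h _)
    have h2 := (hcomm (0, 0, true) p).mp (h _)
    simp only [cond_false, cond_true, zero_add, neg_zero, Bool.cond_self, add_zero] at h1 h2
    refine ⟨ZMod.eq_zero_of_neg_eq_self hodd h2, ?_⟩
    cases hε : p.2.2
    · rfl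
    · rw [hε, cond_true] at h1
      exact absurd (ZMod.one_eq_zero_iff.mp
        (ZMod.eq_zero_of_neg_eq_self hodd (by linear_combination -h1))) hm
  · rintro ⟨h1, h2⟩ g
    obtain ⟨q, rfl⟩ := hbij.2 g
    simp [hcomm, h1, h2]

variable (m n) in
abbrev NoncentralCoords := {p : ZMod m × ZMod n × Bool // ¬(p.1 = 0 ∧ p.2.2 = false)}

-- `none` labels the non-central elements of the abelian subgroup `⟨a, b ^ 2⟩`, and `some i` the
-- coset `a ^ i * b * ⟨b ^ 2⟩`.
def cliqueIndex (p : NoncentralCoords m n) : Option (ZMod m) :=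
  cond p.1.2.2 (some p.1.1) none

theorem coords_mul_comm_iff_cliqueIndex_eq [NeZero m] (hodd : Odd m) (ha : a ^ m = 1)
    (hrel : b * a * b⁻¹ = a⁻¹) (hinj : Function.Injective fun i : ZMod m ↦ a ^ i.val)
    (p q : NoncentralCoords m n) :
    coords a b m n p * coords a b m n q = coords a b m n q * coords a b m n p ↔
      cliqueIndex p = cliqueIndex q := by
  obtain ⟨⟨i, k, ε⟩, hp⟩ := p
  obtain ⟨⟨j, l, δ⟩, hq⟩ := q
  rw [coords_mul_comm_iff ha hrel hinj]
  cases ε <;> cases δ <;> simp only [cliqueIndex, cond_true, cond_false, reduceCtorEq,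
    Option.some.injEq, iff_true, iff_false]
  · exact add_comm i j
  · exact fun h ↦ hp ⟨ZMod.eq_zero_of_neg_eq_self hodd (by linear_combination -h), rfl⟩
  · exact fun h ↦ hq ⟨ZMod.eq_zero_of_neg_eq_self hodd (by linear_combination h), rfl⟩
  · exact ⟨fun h ↦ sub_eq_zero.mp (ZMod.eq_zero_of_neg_eq_self hodd (by linear_combination -h)),
      fun h ↦ by rw [h]⟩

theorem cliqueIndex_surjective (hm : m ≠ 1) :
    Function.Surjective (cliqueIndex (m := m) (n := n)) := by
  rintro (_ | i)
  · exact ⟨⟨(1, 0, false), fun h ↦ hm (ZMod.one_eq_zero_iff.mp h.1)⟩, rfl⟩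
  · exact ⟨⟨(i, 0, true), fun h ↦ Bool.noConfusion h.2⟩, rfl⟩

theorem card_cliqueIndex_eq_none [NeZero m] [NeZero n] :
    Fintype.card {p : NoncentralCoords m n // cliqueIndex p = none} = (m - 1) * n := by
  let e :
      {p : NoncentralCoords m n // cliqueIndex p = none} ≃ {i : ZMod m // i ≠ 0} × ZMod n :=
    { toFun := fun ⟨⟨⟨i, k, ε⟩, hp⟩, hw⟩ ↦
        (⟨i, fun hi ↦ hp ⟨hi, by cases ε <;> simp_all [cliqueIndex]⟩⟩, k)
      invFun := fun ⟨⟨i, hi⟩, k⟩ ↦ ⟨⟨(i, k, false), fun h ↦ hi h.1⟩, rfl⟩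
      left_inv := by
        rintro ⟨⟨⟨i, k, _ | _⟩, hp⟩, hw⟩
        · rfl
        · simp [cliqueIndex] at hw
      right_inv := fun _ ↦ rfl }
  rw [Fintype.card_congr e, Fintype.card_prod, Fintype.card_subtype_compl,
    Fintype.card_subtype_eq, ZMod.card, ZMod.card]

theorem card_cliqueIndex_eq_some [NeZero m] [NeZero n] (i : ZMod m) :
    Fintype.card {p : NoncentralCoords m n // cliqueIndex p = some i} = n := by
  let e : {p : NoncentralCoords m n // cliqueIndex p = some i} ≃ ZMod n :=
    { toFun := fun p ↦ p.1.1.2.1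
      invFun := fun k ↦ ⟨⟨(i, k, true), fun h ↦ Bool.noConfusion h.2⟩, rfl⟩
      left_inv := by
        rintro ⟨⟨⟨j, k, _ | _⟩, hp⟩, hw⟩
        · simp [cliqueIndex] at hw
        · simp only [cliqueIndex, cond_true, Option.some.injEq] at hw
          subst hw
          rfl
      right_inv := fun _ ↦ rfl }
  rw [Fintype.card_congr e, ZMod.card]

theorem charpoly_commutingGraph [Fintype G] (hm : m ≠ 1) (hodd : Odd m) (ha : a ^ m = 1)
    (hb : b ^ (2 * n) = 1) (hrel : b * a * b⁻¹ = a⁻¹)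
    (hgen : Subgroup.closure ({a, b} : Set G) = ⊤) (hcard : Nat.card G = 2 * m * n) :
    commCharpoly G = (X + 1) ^ ((m - 1) * n - 1) * (X - C ((((m - 1) * n : ℕ) : ℝ) - 1)) *
      ((X + 1) ^ (n - 1) * (X - C ((n : ℝ) - 1))) ^ m := by
  classical
  have : NeZero m := ⟨hodd.pos.ne'⟩
  have : NeZero n := ⟨by rintro rfl; simp at hcard⟩
  have hbij : Function.Bijective (coords a b m n) :=
    (Fintype.bijective_iff_surjective_and_card _).mpr ⟨coords_surjective ha hb hrel hgen, by
      rw [Fintype.card_prod, Fintype.card_prod, ZMod.card, ZMod.card, Fintype.card_bool,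
        ← Nat.card_eq_fintype_card, hcard]; ring⟩
  let e : NoncentralCoords m n ≃ {x : G // x ∉ Subgroup.center G} :=
    (Equiv.ofBijective _ hbij).subtypeEquiv fun p ↦
      (coords_mem_center_iff hm hodd ha hrel hbij p).not.symm
  have hadj (x y) : (commutingGraph G).Adj x y ↔
      x ≠ y ∧ cliqueIndex (e.symm x) = cliqueIndex (e.symm y) := by
    obtain ⟨p, rfl⟩ := e.surjective x
    obtain ⟨q, rfl⟩ := e.surjective y
    rw [e.symm_apply_apply, e.symm_apply_apply,
      ← coords_mul_comm_iff_cliqueIndex_eq hodd ha hrel (pow_val_injective hbij.1)]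
    rfl
  have hsurj : Function.Surjective fun x ↦ cliqueIndex (e.symm x) :=
    (cliqueIndex_surjective hm).comp e.symm.surjective
  have hfiber (o) : Fintype.card {x // cliqueIndex (e.symm x) = o} =
      Fintype.card {p // cliqueIndex p = o} :=
    Fintype.card_congr (e.symm.subtypeEquiv fun _ ↦ Iff.rfl)
  rw [commCharpoly, SimpleGraph.charpoly_adjMatrix_of_adj_iff _ _ hadj,
    image_univ_of_surjective hsurj, Fintype.prod_option]
  simp only [hfiber, card_cliqueIndex_eq_none, card_cliqueIndex_eq_some,
    prod_const, card_univ, ZMod.card]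

end Metacyclic

theorem Nat.sub_one_mul_sub_one_add_sub_one_mul {m n : ℕ} (hm : 2 ≤ m) :
    (m - 1) * n - 1 + (n - 1) * m = 2 * m * n - m - n - 1 := by
  rcases Nat.eq_zero_or_pos n with rfl | hn
  · simp
  have h1 : (m - 1) * n = m * n - n := Nat.sub_one_mul m n
  have h2 : (n - 1) * m = m * n - m := by rw [Nat.sub_one_mul, mul_comm]
  have h3 : 2 * n ≤ m * n := Nat.mul_le_mul_right n hm
  have h4 : m ≤ m * n := Nat.le_mul_of_pos_right m hn
  rw [h1, h2, mul_assoc]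
  omega

theorem commuting_integral_metacyclic_odd_general
    (m n : ℕ) (hm : 2 < m) (hmodd : Odd m)
    (G : Type*) [Group G] [Fintype G] (a b : G)
    (hcard : Nat.card G = 2 * m * n)
    (ha : a ^ m = 1) (hb : b ^ (2 * n) = 1) (hrel : b * a * b⁻¹ = a⁻¹)
    (hgen : Subgroup.closure ({a, b} : Set G) = ⊤) :
    commCharpoly G =
        (X + 1) ^ (2 * m * n - m - n - 1) *
          (X - C ((n : ℝ) - 1)) ^ m *
          (X - C ((m : ℝ) * n - n - 1)) ∧
      ∀ μ : ℝ, (commCharpoly G).IsRoot μ → ∃ k : ℤ, μ = (k : ℝ) := by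
  have hchar : commCharpoly G = (X + 1) ^ (2 * m * n - m - n - 1) *
      (X - C ((n : ℝ) - 1)) ^ m * (X - C ((m : ℝ) * n - n - 1)) := by
    rw [Metacyclic.charpoly_commutingGraph (by omega) hmodd ha hb hrel hgen hcard,
      ← Nat.sub_one_mul_sub_one_add_sub_one_mul hm.le, Nat.cast_mul,
      Nat.cast_sub (by omega : 1 ≤ m), Nat.cast_one,
      show ((m : ℝ) - 1) * n - 1 = m * n - n - 1 by ring, mul_pow, ← pow_mul, pow_add]
    ring
  refine ⟨hchar, fun μ hμ ↦ ?_⟩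
  simp only [IsRoot, hchar, eval_mul, eval_pow, eval_add, eval_sub, eval_X, eval_C, eval_one,
    mul_eq_zero, pow_eq_zero_iff', sub_eq_zero] at hμ
  rcases hμ with (⟨hμ, -⟩ | ⟨hμ, -⟩) | hμ
  · exact ⟨-1, by push_cast; linarith⟩
  · exact ⟨n - 1, by push_cast; exact hμ⟩
  · exact ⟨m * n - n - 1, by push_cast; exact hμ⟩

theorem commuting_integral_metacyclic_odd
    (m n : ℕ) (hm : 2 < m) (hmodd : Odd m) (hn : 1 ≤ n)
    (G : Type*) [Group G] [Fintype G] (a b : G)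
    (hcard : Nat.card G = 2 * m * n)
    (ha : a ^ m = 1) (hb : b ^ (2 * n) = 1) (hrel : b * a * b⁻¹ = a⁻¹)
    (hgen : Subgroup.closure ({a, b} : Set G) = ⊤) :
    commCharpoly G =
        (X + 1) ^ (2 * m * n - m - n - 1) *
          (X - C ((n : ℝ) - 1)) ^ m *
          (X - C ((m : ℝ) * n - n - 1)) ∧
      ∀ μ : ℝ, (commCharpoly G).IsRoot μ → ∃ k : ℤ, μ = (k : ℝ) :=
  commuting_integral_metacyclic_odd_general m n hm hmodd G a b hcard ha hb hrel hgen
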